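/- Let V be a real inner product space and suppose a vector n ∈ V satisfies ⟨W, Z⟩·⟨n, φ(Y)⟩ = ⟨W, Y⟩·⟨n, φ(Z)⟩ for all W, Y, Z ∈ V, where φ : V → V' is a linear map into another inner product space. If dim V > 1, then ⟨n, φ(W)⟩ = 0 for every W ∈ V. -/

import Mathlib

open scoped RealInnerProductSpace

section

variable {V : Type*} [NormedAddCommGroup V] [InnerProductSpace ℝ V]

theorem exists_ne_zero_inner_eq_zero_of_one_lt_finrank (hdim : 1 < Module.finrank ℝ V) (W : V) :
    ∃ Z : V, Z ≠ 0 ∧ ⟪Z, W⟫ = 0 := by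
  have hspan : (ℝ ∙ W) ≠ ⊤ := by
    intro htop
    have hle : Module.finrank ℝ (ℝ ∙ W) ≤ 1 := by
      simpa using finrank_span_le_card ({W} : Set V)
    rw [htop, finrank_top] at hle
    omega
  obtain ⟨Z, hZ, hZne⟩ :=
    Submodule.exists_mem_ne_zero_of_ne_bot (mt Submodule.orthogonal_eq_bot_iff.mp hspan)
  exact ⟨Z, hZne, Submodule.mem_orthogonal_singleton_iff_inner_left.mp hZ⟩

/-- Testing the relation on a nonzero `Z ⟂ W` gives `‖Z‖² f W = ⟪Z, W⟫ f Z = 0`. -/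
theorem eq_zero_of_inner_mul_comm (hdim : 1 < Module.finrank ℝ V) {f : V → ℝ}
    (hf : ∀ W Y Z : V, ⟪W, Z⟫ * f Y = ⟪W, Y⟫ * f Z) (W : V) : f W = 0 := by
  obtain ⟨Z, hZne, hZW⟩ := exists_ne_zero_inner_eq_zero_of_one_lt_finrank hdim W
  have h := hf Z Z W
  rw [hZW, zero_mul, real_inner_self_eq_norm_sq] at h
  exact (mul_eq_zero.mp h.symm).resolve_left (by positivity)

end

theorem symmetric_relation_forces_vanishing_general
    {V V' : Type*} [NormedAddCommGroup V] [InnerProductSpace ℝ V]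
    [NormedAddCommGroup V'] [InnerProductSpace ℝ V']
    (φ : V →ₗ[ℝ] V') (n : V')
    (hdim : 1 < Module.finrank ℝ V)
    (hrel : ∀ W Y Z : V, ⟪W, Z⟫ * ⟪n, φ Y⟫ = ⟪W, Y⟫ * ⟪n, φ Z⟫) :
    ∀ W : V, ⟪n, φ W⟫ = 0 :=
  eq_zero_of_inner_mul_comm hdim hrel

/-- Linear-algebraic core of minimality: a symmetric relation forces ⟪n, φ W⟫ = 0. -/
theorem symmetric_relation_forces_vanishing
    {V V' : Type*} [NormedAddCommGroup V] [InnerProductSpace ℝ V]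
    [NormedAddCommGroup V'] [InnerProductSpace ℝ V']
    [FiniteDimensional ℝ V]
    (φ : V →ₗ[ℝ] V') (n : V')
    (hdim : 1 < Module.finrank ℝ V)
    (hrel : ∀ W Y Z : V, ⟪W, Z⟫ * ⟪n, φ Y⟫ = ⟪W, Y⟫ * ⟪n, φ Z⟫) :
    ∀ W : V, ⟪n, φ W⟫ = 0 :=
  symmetric_relation_forces_vanishing_general φ n hdim hrel
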